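/- Let n ∈ ℕ, w : Fin n → ℕ, s = Σ_{i<n} w(i), and t ≤ s. Over the alphabet {0,1}, let block(v) = 0^v 1 0^{s−v}, let P be the concatenation of 2^n copies of block(t), and let T be the concatenation, over x = 0, 1, …, 2^n − 1 in order, of block(x̄·w̄). Then HD(P, T) < 2^{n+1} if and only if there exist x₁, …, xₙ ∈ {0,1} with Σ_{i<n} xᵢ·w(i) = t (i.e. the Subset Sum instance (w, t) has a positive answer). -/

import Mathlib

/-!
Two blocks `block s t` and `block s v` agree except at the positions `t` and `v` of their
single `1`, so they are at Hamming distance `0` if `v = t` and `2` otherwise. Hence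
`HD(P, T) = 2 · #{x < 2^n | x̄·w̄ ≠ t}`, which is below `2 · 2^n` exactly when some `x < 2^n`
has `x̄·w̄ = t`; and the binary digit vectors of the `x < 2^n` are exactly the `0/1` vectors.
-/

/-- `block s v = 0^v 1 0^(s−v)`, a string of length `s + 1` over `{0,1}` (as `Bool`). -/
def block (s v : ℕ) : List Bool :=
  List.replicate v false ++ [true] ++ List.replicate (s - v) false

/-- `x̄·w̄ = Σ_{i<n} (i-th binary digit of x)·w(i)`. -/
def dotw (n : ℕ) (w : Fin n → ℕ) (x : ℕ) : ℕ :=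
  ∑ i : Fin n, if Nat.testBit x i.val then w i else 0

/-- Hamming distance between two strings (of equal length): the number of
indices at which they differ. -/
def HD (A B : List Bool) : ℕ :=
  ((Finset.range A.length).filter (fun i => A[i]? ≠ B[i]?)).card

open Finset

lemma block_length {s v : ℕ} (hv : v ≤ s) : (block s v).length = s + 1 := by
  simp only [block, List.length_append, List.length_replicate, List.length_singleton]
  omega

lemma block_getElem? {s i : ℕ} (v : ℕ) (hi : i ≤ s) :
    (block s v)[i]? = some (decide (i = v)) := by
  simp only [block, List.getElem?_append, List.getElem?_replicate, List.length_append,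
    List.length_replicate, List.length_singleton]
  split_ifs <;> simp_all <;> omega

lemma HD_append {A B : List Bool} (C D : List Bool) (h : A.length = B.length) :
    HD (A ++ C) (B ++ D) = HD A B + HD C D := by
  unfold HD
  rw [List.length_append, range_add, filter_union, filter_map,
    card_union_of_disjoint, card_map]
  · congr 2
    · refine filter_congr fun i hi => ?_
      rw [mem_range] at hi
      rw [List.getElem?_append_left hi, List.getElem?_append_left (h ▸ hi)]
    · refine filter_congr fun i _ => ?_
      simp [List.getElem?_append_right, h]
  · refine disjoint_left.2 fun i hi hi' => ?_
    obtain ⟨j, -, rfl⟩ := mem_map.1 hi'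
    simp at hi

lemma HD_flatten_map {α : Type*} (L : List α) (f g : α → List Bool)
    (h : ∀ x ∈ L, (f x).length = (g x).length) :
    HD (L.map f).flatten (L.map g).flatten = (L.map fun x => HD (f x) (g x)).sum := by
  induction L with
  | nil => simp [HD]
  | cons a L ih =>
    simp only [List.map_cons, List.flatten_cons, List.sum_cons,
      HD_append _ _ (h a List.mem_cons_self), ih fun x hx => h x (List.mem_cons_of_mem a hx)]

lemma HD_block {s t v : ℕ} (ht : t ≤ s) (hv : v ≤ s) :
    HD (block s t) (block s v) = if v = t then 0 else 2 := by
  split_ifs with h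
  · simp [h, HD]
  · have differ :
        (range (s + 1)).filter (fun i => (block s t)[i]? ≠ (block s v)[i]?) = {t, v} := by
      ext i
      simp only [mem_filter, mem_range, mem_insert, mem_singleton]
      constructor
      · rintro ⟨hi, hne⟩
        rw [block_getElem? t (by omega), block_getElem? v (by omega)] at hne
        by_contra! hc
        simp [hc.1, hc.2] at hne
      · rintro (rfl | rfl) <;> refine ⟨by omega, ?_⟩ <;>
          simp [block_getElem? _ ht, block_getElem? _ hv, h, Ne.symm h]
    rw [HD, block_length ht, differ, card_pair (Ne.symm h)]

lemma testBit_sum_two_pow (S : Finset ℕ) (j : ℕ) :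
    (∑ i ∈ S, 2 ^ i).testBit j = decide (j ∈ S) := by
  rw [Bool.eq_iff_iff, decide_eq_true_iff, ← Nat.mem_bitIndices, ← List.mem_toFinset,
    toFinset_bitIndices_sum_two_pow]

lemma dotw_le (n : ℕ) (w : Fin n → ℕ) (x : ℕ) : dotw n w x ≤ ∑ i, w i :=
  sum_le_sum fun i _ => by split <;> simp

lemma exists_dotw_eq_iff (n : ℕ) (w : Fin n → ℕ) (t : ℕ) :
    (∃ x ∈ range (2 ^ n), dotw n w x = t) ↔
      ∃ y : Fin n → ℕ, (∀ i, y i = 0 ∨ y i = 1) ∧ ∑ i, y i * w i = t := by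
  constructor
  · rintro ⟨x, -, rfl⟩
    refine ⟨fun i => (x.testBit i).toNat, fun i => by cases x.testBit i <;> simp, ?_⟩
    exact sum_congr rfl fun i _ => by cases h : x.testBit i <;> simp [h]
  · rintro ⟨y, hy, rfl⟩
    set S := (univ.filter fun i => y i = 1).map Fin.valEmbedding
    have mem_S (i : Fin n) : i.val ∈ S ↔ y i = 1 := by simp [S, Fin.val_inj]
    refine ⟨∑ i ∈ S, 2 ^ i, mem_range.2 (Nat.geomSum_lt le_rfl fun k hk => ?_), ?_⟩
    · obtain ⟨i, -, rfl⟩ := mem_map.1 hk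
      exact i.isLt
    · refine sum_congr rfl fun i _ => ?_
      rcases hy i with h | h <;> simp [testBit_sum_two_pow, mem_S, h]

lemma card_filter_not_lt_card_iff {α : Type*} (s : Finset α) (p : α → Prop)
    [DecidablePred p] :
    #(s.filter fun x => ¬ p x) < #s ↔ ∃ x ∈ s, p x := by
  simp [(card_filter_le s _).lt_iff_ne, card_filter_eq_iff]

/-- `HD(P, T) < 2^{n+1}` iff the Subset Sum instance `(w, t)` has a positive answer. -/
theorem stmt_14 (n : ℕ) (w : Fin n → ℕ) (t : ℕ) (ht : t ≤ ∑ i, w i) :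
    HD ((List.replicate (2 ^ n) (block (∑ i, w i) t)).flatten)
        (((List.range (2 ^ n)).map fun x => block (∑ i, w i) (dotw n w x)).flatten) <
        2 ^ (n + 1) ↔
      ∃ x : Fin n → ℕ, (∀ i, x i = 0 ∨ x i = 1) ∧ ∑ i, x i * w i = t := by
  set s := ∑ i, w i
  have hP :
      List.replicate (2 ^ n) (block s t) = (List.range (2 ^ n)).map fun _ => block s t := by
    rw [List.map_const', List.length_range]
  have hHD : HD (List.replicate (2 ^ n) (block s t)).flatten
      ((List.range (2 ^ n)).map fun x => block s (dotw n w x)).flatten =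
      2 * #((range (2 ^ n)).filter fun x => ¬ dotw n w x = t) := by
    rw [hP, HD_flatten_map _ _ _ fun x _ => by rw [block_length ht, block_length (dotw_le n w x)]]
    change ∑ x ∈ range (2 ^ n), HD (block s t) (block s (dotw n w x)) = _
    rw [sum_congr rfl fun x _ => HD_block ht (dotw_le n w x), sum_ite, sum_const_zero,
      sum_const, smul_eq_mul, zero_add, mul_comm]
  rw [hHD, pow_succ, mul_comm _ 2, Nat.mul_lt_mul_left two_pos, ← exists_dotw_eq_iff,
    ← card_filter_not_lt_card_iff, card_range]
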